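/- Let g : ℝ_{>0} → ℝ be convex and suppose a^3/100 ≤ g(a) ≤ 8a^3 for all a ≥ 4. Then for all a ≥ 4 and all δ ∈ (0,1): g(a) − g(a(1−δ)) ≤ g(a(1+δ)) − g(a) ≤ 10^4 · δ · g(a). -/

import Mathlib

/-! Midpoint convexity at `a` between `a(1 - δ)` and `a(1 + δ)` gives the first inequality.
For the second, `a(1 + δ)` lies on the chord from `a` to `2a`, so its increment over `g a` is at
most `δ (g (2a) - g a)`; the cubic bounds make `g (2a) ≤ 6400 g a`. -/

section Convexity

variable {𝕜 E : Type*} [Field 𝕜] [LinearOrder 𝕜] [IsStrictOrderedRing 𝕜]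
  [AddCommGroup E] [Module 𝕜 E] {s : Set E} {f : E → 𝕜}

theorem ConvexOn.backward_diff_le_forward_diff (hf : ConvexOn 𝕜 s f) {x h : E}
    (hl : x - h ∈ s) (hr : x + h ∈ s) : f x - f (x - h) ≤ f (x + h) - f x := by
  have hmid := hf.2 hl hr (by norm_num : (0 : 𝕜) ≤ 1 / 2)
    (by norm_num : (0 : 𝕜) ≤ 1 / 2) (by norm_num)
  have hx : (1 / 2 : 𝕜) • (x - h) + (1 / 2 : 𝕜) • (x + h) = x := by
    rw [← smul_add, sub_add_add_cancel, ← two_smul 𝕜 x, smul_smul]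
    norm_num
  rw [hx, smul_eq_mul, smul_eq_mul] at hmid
  linarith

theorem ConvexOn.sub_le_mul_sub (hf : ConvexOn 𝕜 s f) {x y : E} (hx : x ∈ s) (hy : y ∈ s)
    {t : 𝕜} (ht₀ : 0 ≤ t) (ht₁ : t ≤ 1) : f (x + t • (y - x)) - f x ≤ t * (f y - f x) := by
  have hchord := hf.2 hx hy (sub_nonneg.2 ht₁) ht₀ (by ring)
  have hpt : (1 - t) • x + t • y = x + t • (y - x) := by
    rw [sub_smul, one_smul, smul_sub]
    abel
  rw [hpt, smul_eq_mul, smul_eq_mul] at hchord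
  linarith

end Convexity

theorem map_two_mul_le_of_cubic_bounds {g : ℝ → ℝ}
    (hbound : ∀ a : ℝ, 4 ≤ a → a ^ 3 / 100 ≤ g a ∧ g a ≤ 8 * a ^ 3) {a : ℝ} (ha : 4 ≤ a) :
    g (2 * a) ≤ 6400 * g a := by
  have hg2a := (hbound (2 * a) (by linarith)).2
  have hga := (hbound a ha).1
  linarith

/-- For a convex `g` on the positive reals with `a^3/100 ≤ g a ≤ 8 a^3` for `a ≥ 4`,
for all `a ≥ 4` and `δ ∈ (0,1)`:
`g a − g (a(1−δ)) ≤ g (a(1+δ)) − g a ≤ 10^4 δ g a`. -/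
theorem convex_increment_bounds (g : ℝ → ℝ)
    (hconv : ConvexOn ℝ (Set.Ioi (0 : ℝ)) g)
    (hbound : ∀ a : ℝ, 4 ≤ a → a ^ 3 / 100 ≤ g a ∧ g a ≤ 8 * a ^ 3) :
    ∀ a δ : ℝ, 4 ≤ a → 0 < δ → δ < 1 →
      g a - g (a * (1 - δ)) ≤ g (a * (1 + δ)) - g a ∧
      g (a * (1 + δ)) - g a ≤ 10 ^ 4 * δ * g a := by
  intro a δ ha hδ₀ hδ₁
  have ha₀ : 0 < a := by linarith
  have hga : 0 ≤ g a := le_trans (by positivity) (hbound a ha).1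
  constructor
  · have hsym := hconv.backward_diff_le_forward_diff (x := a) (h := a * δ)
      (Set.mem_Ioi.2 (by nlinarith)) (Set.mem_Ioi.2 (by positivity))
    rwa [← mul_one_sub, ← mul_one_add] at hsym
  · have hchord := hconv.sub_le_mul_sub (x := a) (y := 2 * a) ha₀ (Set.mem_Ioi.2 (by linarith))
      hδ₀.le hδ₁.le
    have hpt : a + δ • (2 * a - a) = a * (1 + δ) := by rw [smul_eq_mul]; ring
    rw [hpt] at hchord
    calc g (a * (1 + δ)) - g a ≤ δ * (g (2 * a) - g a) := hchord
      _ ≤ δ * (6400 * g a) := by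
        gcongr
        linarith [map_two_mul_le_of_cubic_bounds hbound ha]
      _ ≤ 10 ^ 4 * δ * g a := by nlinarith
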